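/- arXiv:2310.11356 — 7 statements merged into one kernel-verified Lean document; each statement's English description precedes it below -/
import Mathlib

section
/- Let X be a finite set, 𝔽 a field, r ≥ 0, and let A₁,…,A_r, A : X → 𝔽 be linearly independent functions. Then there exists a function u : X → 𝔽 supported on at most r+1 points of X such that Σ_{x∈X} u(x)A_i(x) = 0 for every i ∈ [r] and Σ_{x∈X} u(x)A(x) = 1. -/
open Finset

/-- `P` is a partition of `[d] = Fin d`: parts are non-empty, pairwise disjoint,
and their union is all of `Fin d`. -/
def IsPartitionOn (d : ℕ) (P : Finset (Finset (Fin d))) : Prop :=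
  (∀ J ∈ P, J.Nonempty) ∧
  (∀ J ∈ P, ∀ K ∈ P, J ≠ K → Disjoint J K) ∧
  P.sup id = Finset.univ

/-- `P` is finer than `Q`: every part of `P` is contained in some part of `Q`. -/
def Finer {d : ℕ} (P Q : Finset (Finset (Fin d))) : Prop :=
  ∀ J ∈ P, ∃ K ∈ Q, J ⊆ K

/-- Least common refinement of two partitions. -/
def partMeet {d : ℕ} (P Q : Finset (Finset (Fin d))) : Finset (Finset (Fin d)) :=
  ((P ×ˢ Q).image fun p => p.1 ∩ p.2).filter fun J => J.Nonempty

/-- Least common refinement of two families of partitions. -/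
def famMeet {d : ℕ} (R₁ R₂ : Finset (Finset (Finset (Fin d)))) :
    Finset (Finset (Finset (Fin d))) :=
  (R₁ ×ˢ R₂).image fun p => partMeet p.1 p.2

/-- `R₂ ≺ R₁` for families of partitions. -/
def FamFiner {d : ℕ} (R₂ R₁ : Finset (Finset (Finset (Fin d)))) : Prop :=
  ∀ P ∈ R₂, ∃ Q ∈ R₁, Finer P Q

/-- `R` is a non-empty family of partitions of `[d]`. -/
def IsPartitionFamily (d : ℕ) (R : Finset (Finset (Finset (Fin d)))) : Prop :=
  R.Nonempty ∧ ∀ P ∈ R, IsPartitionOn d P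

variable {F : Type*} [Field F]

/-- `f` depends only on the coordinates in `J`. -/
def DependsOnlyOn {d : ℕ} {n : Fin d → ℕ} (f : (∀ j, Fin (n j)) → F)
    (J : Finset (Fin d)) : Prop :=
  ∀ x y : ∀ j, Fin (n j), (∀ j ∈ J, x j = y j) → f x = f y

/-- `T` has `R`-rank at most 1. -/
def RankOne {d : ℕ} {n : Fin d → ℕ} (R : Finset (Finset (Finset (Fin d))))
    (T : (∀ j, Fin (n j)) → F) : Prop :=
  ∃ P ∈ R, ∃ a : Finset (Fin d) → ((∀ j, Fin (n j)) → F),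
    (∀ J ∈ P, DependsOnlyOn (a J) J) ∧ ∀ x, T x = ∏ J ∈ P, a J x

/-- `T` has `R`-rank at most `k`. -/
def RRankLE {d : ℕ} {n : Fin d → ℕ} (R : Finset (Finset (Finset (Fin d))))
    (T : (∀ j, Fin (n j)) → F) (k : ℕ) : Prop :=
  ∃ c : Fin k → ((∀ j, Fin (n j)) → F),
    (∀ i, RankOne R (c i)) ∧ ∀ x, T x = ∑ i, c i x

open Classical in
/-- The tensor `Δ_P`, the product of the identity tensors on the parts of `P`. -/
noncomputable def DeltaP {d n : ℕ} (P : Finset (Finset (Fin d))) :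
    (Fin d → Fin n) → F :=
  fun x => if ∀ J ∈ P, ∀ j₁ ∈ J, ∀ j₂ ∈ J, x j₁ = x j₂ then 1 else 0

/-! Linear independence of the `r + 1` rows `A₁, …, A_r, A` means the columns `x ↦ (A_i x)_i`
span `F^{r+1}`, so some at most `r + 1` of them, linearly independent, already span it; the
coefficients expressing the last unit vector in these columns form the required `u`. -/

open Function Submodule

theorem Matrix.span_range_col_eq_top_of_linearIndependent_row {m n : Type*} [Fintype m]
    [Fintype n] {M : Matrix m n F} (h : LinearIndependent F M.row) :
    span F (Set.range M.col) = ⊤ := by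
  apply eq_top_of_finrank_eq
  rw [← M.rank_eq_finrank_span_cols, h.rank_matrix, Module.finrank_fintype_fun_eq_card]

theorem exists_ncard_support_le_finrank_of_mem_span {X V : Type*} [Fintype X] [AddCommGroup V]
    [Module F V] [FiniteDimensional F V] {v : X → V} {e : V} (he : e ∈ span F (Set.range v)) :
    ∃ u : X → F, (support u).ncard ≤ Module.finrank F V ∧ ∑ x, u x • v x = e := by
  obtain ⟨κ, a, ha, hspan, hli⟩ := exists_linearIndependent' F v
  have : Fintype κ := Fintype.ofInjective a ha
  rw [← hspan, mem_span_range_iff_exists_fun] at he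
  obtain ⟨c, rfl⟩ := he
  refine ⟨extend a c 0, ?_, ?_⟩
  · calc (support (extend a c 0)).ncard ≤ (Set.range a).ncard :=
          Set.ncard_le_ncard (support_extend_zero_subset.trans (Set.image_subset_range _ _))
      _ = Fintype.card κ := by rw [Set.ncard_range_of_injective ha, Nat.card_eq_fintype_card]
      _ ≤ Module.finrank F V := hli.fintype_card_le_finrank
  · refine (Fintype.sum_of_injective a ha _ _ (fun x hx => ?_) fun k => ?_).symm
    · rw [extend_apply' _ _ _ (by simpa using hx), Pi.zero_apply, zero_smul]
    · rw [ha.extend_apply, comp_apply]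

theorem exists_ncard_support_le_card_of_linearIndependent {ι X : Type*} [Fintype ι] [Fintype X]
    {w : ι → X → F} (hw : LinearIndependent F w) (e : ι → F) :
    ∃ u : X → F, (support u).ncard ≤ Fintype.card ι ∧ ∀ i, ∑ x, u x * w i x = e i := by
  have he : e ∈ span F (Set.range (Matrix.of w).col) := by
    rw [Matrix.span_range_col_eq_top_of_linearIndependent_row (M := Matrix.of w) hw]
    exact mem_top
  obtain ⟨u, hcard, hu⟩ := exists_ncard_support_le_finrank_of_mem_span he
  refine ⟨u, hcard.trans_eq (Module.finrank_fintype_fun_eq_card F), fun i => ?_⟩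
  simpa [Finset.sum_apply] using congrFun hu i

theorem exists_small_support_dual {X : Type*} [Fintype X] (r : ℕ)
    (A : Fin r → X → F) (B : X → F)
    (h : LinearIndependent F (Fin.snoc A B : Fin (r + 1) → X → F)) :
    ∃ u : X → F, (Function.support u).ncard ≤ r + 1 ∧
      (∀ i : Fin r, ∑ x, u x * A i x = 0) ∧ ∑ x, u x * B x = 1 := by
  obtain ⟨u, hcard, hu⟩ :=
    exists_ncard_support_le_card_of_linearIndependent h (Pi.single (Fin.last r) 1)
  refine ⟨u, by simpa using hcard, fun i => ?_, by simpa using hu (Fin.last r)⟩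
  simpa [(Fin.castSucc_lt_last i).ne] using hu i.castSucc
end

section
/- Suppose Σ_{i=1}^r a_i(x) b_i(y,z) = Σ_{j=1}^s c_j(y) d_j(x,z) for all (x,y,z) ∈ [n₁]×[n₂]×[n₃], where a_i : [n₁] → 𝔽, b_i : [n₂]×[n₃] → 𝔽, c_j : [n₂] → 𝔽, d_j : [n₁]×[n₃] → 𝔽. Then the common tensor T(x,y,z) given by either side has tensor rank at most rs, i.e., T can be written as a sum of at most rs tensors of the form e(x)f(y)g(z). -/
/-!
Fix `y, z`. The slice `x ↦ T(x,y,z) = ∑ᵢ aᵢ(x) bᵢ(y,z)` lies in the span of the `aᵢ`, and a linear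
section `φ` of `u ↦ ∑ᵢ uᵢ aᵢ` over that span recovers coefficients from it linearly. Applying `φ`
to the other expression `∑ⱼ cⱼ(y) dⱼ(·,z)` gives `T(x,y,z) = ∑ᵢ ∑ⱼ aᵢ(x) cⱼ(y) φ(dⱼ(·,z))ᵢ`, a sum
of `rs` rank-one terms.
-/

open Finset

variable {F : Type*} [Field F]

theorem LinearMap.exists_rightInverse_on_range {K V W : Type*} [DivisionRing K]
    [AddCommGroup V] [Module K V] [AddCommGroup W] [Module K W] (f : V →ₗ[K] W) :
    ∃ φ : W →ₗ[K] V, ∀ w ∈ range f, f (φ w) = w := by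
  obtain ⟨g, hg⟩ := f.rangeRestrict.exists_rightInverse_of_surjective f.range_rangeRestrict
  obtain ⟨φ, hφ⟩ := g.exists_extend
  refine ⟨φ, fun w hw => ?_⟩
  have hφw : φ w = g ⟨w, hw⟩ := LinearMap.congr_fun hφ ⟨w, hw⟩
  rw [hφw]
  exact congr_arg Subtype.val (LinearMap.congr_fun hg ⟨w, hw⟩)

theorem exists_sum_mul_mul_eq_of_sum_mul_eq_sum_mul {ι κ X Y Z : Type*} [Fintype ι] [Fintype κ]
    (a : ι → X → F) (b : ι → Y → Z → F) (c : κ → Y → F) (d : κ → X → Z → F) (h : ∀ x y z, ∑ i, a i x * b i y z = ∑ j, c j y * d j x z) :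
    ∃ g : ι → κ → Z → F,
      ∀ x y z, ∑ i, a i x * b i y z = ∑ i, ∑ j, a i x * c j y * g i j z := by
  set A := Fintype.linearCombination F a
  obtain ⟨φ, hφ⟩ := A.exists_rightInverse_on_range
  refine ⟨fun i j z => φ (fun x => d j x z) i, fun x y z => ?_⟩
  have hslice_eq_A : (fun x => ∑ i, a i x * b i y z) = A fun i => b i y z := by
    ext x
    simp [A, Fintype.linearCombination_apply, mul_comm]
  have hslice_eq_sum : (fun x => ∑ i, a i x * b i y z) = ∑ j, c j y • fun x => d j x z := by
    ext x
    simp [h x y z]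
  calc ∑ i, a i x * b i y z
      = A (φ fun x => ∑ i, a i x * b i y z) x := by
        rw [hφ _ (hslice_eq_A ▸ LinearMap.mem_range_self A _)]
    _ = ∑ i, ∑ j, a i x * c j y * φ (fun x => d j x z) i := by
        simp only [hslice_eq_sum, map_sum, map_smul, A, Fintype.linearCombination_apply,
          Finset.sum_apply, Pi.smul_apply, smul_eq_mul, Finset.mul_sum]
        rw [Finset.sum_comm]
        exact Finset.sum_congr rfl fun _ _ => Finset.sum_congr rfl fun _ _ => by ring

theorem order_three_fragmentation {n₁ n₂ n₃ r s : ℕ}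
    (a : Fin r → Fin n₁ → F) (b : Fin r → Fin n₂ → Fin n₃ → F)
    (c : Fin s → Fin n₂ → F) (dd : Fin s → Fin n₁ → Fin n₃ → F)
    (h : ∀ x y z, ∑ i, a i x * b i y z = ∑ j, c j y * dd j x z) :
    ∃ (e : Fin (r * s) → Fin n₁ → F) (f : Fin (r * s) → Fin n₂ → F)
      (g : Fin (r * s) → Fin n₃ → F),
      ∀ x y z, ∑ i, a i x * b i y z = ∑ i, e i x * f i y * g i z := by
  obtain ⟨g, hg⟩ := exists_sum_mul_mul_eq_of_sum_mul_eq_sum_mul a b c dd h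
  let p : Fin (r * s) ≃ Fin r × Fin s := finProdFinEquiv.symm
  refine ⟨fun k => a (p k).1, fun k => c (p k).2, fun k => g (p k).1 (p k).2, fun x y z => ?_⟩
  rw [hg, ← Fintype.sum_prod_type', ← p.symm.sum_comp]
  simp [p]
end

section
/- Let d ≥ 2 and let T : [n₁] × ⋯ × [n_d] → 𝔽 be an order-d tensor whose j-flattening rank is at most k_j for every j ∈ [d−1]. Then the tensor rank of T is at most k₁ k₂ ⋯ k_{d−1}. -/
open Finset

variable {F : Type*} [Field F]

/-!
If the `j`-flattening rank of `T` is at most `k j`, the rows `s ↦ (a i s)ᵢ` of the flattening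
span a space of dimension at most `k j`, so `T` is recovered from at most `k j` of its slices
`x j = t l`, with coefficients depending on `x j` alone. Doing this for every coordinate but one,
`j₀`, writes `T` as a sum of at most `∏ k j` terms, each a product of functions of the single
coordinates `x j` (`j ≠ j₀`) and of a slice of `T` in which only `x j₀` is free.
-/

open Function

theorem exists_fin_le_finrank_forall_eq_sum_smul {β V : Type*} [AddCommGroup V] [Module F V]
    [FiniteDimensional F V] (v : β → V) :
    ∃ M ≤ Module.finrank F V, ∃ (t : Fin M → β) (a : Fin M → β → F),
      ∀ s, v s = ∑ l, a l s • v (t l) := by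
  obtain ⟨κ, u, -, hspan, hli⟩ := exists_linearIndependent' F v
  have := hli.finite
  let e := Finite.equivFin κ
  have hcard : Nat.card κ ≤ Module.finrank F V := by
    have := Fintype.ofFinite κ
    simpa [Nat.card_eq_fintype_card] using hli.fintype_card_le_finrank
  have hmem (s : β) : v s ∈ Submodule.span F (Set.range (v ∘ u ∘ e.symm)) := by
    rw [← Function.comp_assoc, e.symm.surjective.range_comp, hspan]
    exact Submodule.subset_span ⟨s, rfl⟩
  choose a ha using fun s => (Submodule.mem_span_range_iff_exists_fun F).mp (hmem s)
  exact ⟨_, hcard, u ∘ e.symm, fun l s => a s l, fun s => (ha s).symm⟩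

section Tensors

variable {ι : Type*} {β : ι → Type*} {R : Type*} [CommSemiring R]

section Fintype

variable [Fintype ι]

def TensorRankLE (T : (∀ j, β j) → R) (N : ℕ) : Prop :=
  ∃ c : Fin N → ∀ j, β j → R, ∀ x, T x = ∑ i, ∏ j, c i j (x j)

theorem TensorRankLE.mono [Nonempty ι] {T : (∀ j, β j) → R} {N N' : ℕ}
    (hT : TensorRankLE T N) (hN : N ≤ N') : TensorRankLE T N' := by
  obtain ⟨c, hc⟩ := hT
  obtain ⟨r, rfl⟩ := Nat.exists_eq_add_of_le hN
  refine ⟨Fin.append c 0, fun x => ?_⟩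
  simp [Fin.sum_univ_add, Fin.append_left, Fin.append_right, hc]

theorem tensorRankLE_card {κ : Type*} [Fintype κ] {T : (∀ j, β j) → R}
    (c : κ → ∀ j, β j → R) (hT : ∀ x, T x = ∑ i, ∏ j, c i j (x j)) :
    TensorRankLE T (Fintype.card κ) := by
  let e := Fintype.equivFin κ
  exact ⟨c ∘ e.symm, fun x => by rw [hT, ← e.symm.sum_comp]; rfl⟩

end Fintype

variable [DecidableEq ι]

def FlatteningRankLE (T : (∀ j, β j) → R) (j : ι) (K : ℕ) : Prop :=
  ∃ (a : Fin K → β j → R) (b : Fin K → (∀ j, β j) → R),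
    (∀ i x s, b i (update x j s) = b i x) ∧ ∀ x, T x = ∑ i, a i (x j) * b i x

def HasSliceExpansion (T : (∀ j, β j) → R) (j : ι) (M : ℕ) : Prop :=
  ∃ (a : Fin M → β j → R) (t : Fin M → β j),
    ∀ x, T x = ∑ l, a l (x j) * T (update x j (t l))

theorem FlatteningRankLE.exists_hasSliceExpansion {T : (∀ j, β j) → F}
    {j : ι} {K : ℕ} (hT : FlatteningRankLE T j K) : ∃ M ≤ K, HasSliceExpansion T j M := by
  obtain ⟨a, b, hb, hab⟩ := hT
  obtain ⟨M, hM, t, c, hc⟩ := exists_fin_le_finrank_forall_eq_sum_smul (F := F) fun s i => a i s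
  rw [Module.finrank_fin_fun] at hM
  have ha (i : Fin K) (s : β j) : a i s = ∑ l, c l s * a i (t l) := by
    simpa using congrFun (hc s) i
  refine ⟨M, hM, c, t, fun x => ?_⟩
  calc T x = ∑ i, (∑ l, c l (x j) * a i (t l)) * b i x := by simp only [hab, ← ha]
    _ = ∑ l, c l (x j) * ∑ i, a i (t l) * b i x := by
      simp only [Finset.sum_mul, Finset.mul_sum, mul_assoc]
      exact Finset.sum_comm
    _ = ∑ l, c l (x j) * T (update x j (t l)) := by simp only [hab, update_self, hb]

theorem exists_sum_prod_mul_piecewise {T : (∀ j, β j) → R} (k : ι → ℕ) (s : Finset ι)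
    (hT : ∀ j ∈ s, ∃ M ≤ k j, HasSliceExpansion T j M) :
    ∃ (κ : Type) (_ : Fintype κ), Fintype.card κ ≤ ∏ j ∈ s, k j ∧
      ∃ (c : κ → ∀ j, β j → R) (y : κ → ∀ j, β j),
        ∀ x, T x = ∑ i, (∏ j ∈ s, c i j (x j)) * T (s.piecewise (y i) x) := by
  induction s using Finset.induction_on with
  | empty =>
    rcases isEmpty_or_nonempty (∀ j, β j) with _ | _
    · exact ⟨Empty, inferInstance, by simp, Empty.elim, Empty.elim, isEmptyElim⟩
    · exact ⟨Unit, inferInstance, by simp, 1, fun _ => Classical.arbitrary _, by simp⟩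
  | insert j s hj ih =>
    obtain ⟨κ, _, hκ, c, y, hc⟩ := ih fun j' hj' => hT j' (Finset.mem_insert_of_mem hj')
    obtain ⟨M, hM, a, t, ha⟩ := hT j (Finset.mem_insert_self j s)
    refine ⟨κ × Fin M, inferInstance, ?_, fun p => update (c p.1) j (a p.2),
      fun p => update (y p.1) j (t p.2), fun x => ?_⟩
    · rw [Fintype.card_prod, Fintype.card_fin, Finset.prod_insert hj, mul_comm]
      exact Nat.mul_le_mul hM hκ
    have hstep (i : κ) (l : Fin M) :
        (∏ j' ∈ s, c i j' (x j')) * (a l (x j) * T (update (s.piecewise (y i) x) j (t l))) =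
          (∏ j' ∈ insert j s, update (c i) j (a l) j' (x j')) *
            T ((insert j s).piecewise (update (y i) j (t l)) x) := by
      have hprod : ∏ j' ∈ s, update (c i) j (a l) j' (x j') = ∏ j' ∈ s, c i j' (x j') :=
        Finset.prod_congr rfl fun j' hj' => by rw [update_of_ne (ne_of_mem_of_not_mem hj' hj)]
      rw [Finset.piecewise_insert, update_self, Finset.update_piecewise, Finset.update_piecewise,
        update_idem, Finset.prod_insert hj, update_self, hprod]
      ring
    rw [hc, Fintype.sum_prod_type]
    refine Finset.sum_congr rfl fun i _ => ?_
    rw [ha, Finset.piecewise_eq_of_notMem _ _ _ hj, Finset.mul_sum]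
    exact Finset.sum_congr rfl fun l _ => hstep i l

theorem tensorRankLE_prod_of_flatteningRankLE [Fintype ι] {T : (∀ j, β j) → F} (k : ι → ℕ)
    (j₀ : ι) (hT : ∀ j ≠ j₀, FlatteningRankLE T j (k j)) :
    TensorRankLE T (∏ j ∈ {j₀}ᶜ, k j) := by
  have : Nonempty ι := ⟨j₀⟩
  obtain ⟨κ, _, hκ, c, y, hc⟩ := exists_sum_prod_mul_piecewise k {j₀}ᶜ fun j hj =>
    (hT j (Finset.mem_compl.mp hj ∘ Finset.mem_singleton.mpr)).exists_hasSliceExpansion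
  refine (tensorRankLE_card (fun i => update (c i) j₀ fun v => T (update (y i) j₀ v))
    fun x => ?_).mono hκ
  rw [hc]
  refine Finset.sum_congr rfl fun i _ => ?_
  have hprod : ∏ j ∈ {j₀}ᶜ, update (c i) j₀ (fun v => T (update (y i) j₀ v)) j (x j) =
      ∏ j ∈ {j₀}ᶜ, c i j (x j) :=
    Finset.prod_congr rfl fun j hj => by rw [update_of_ne (by simpa using hj)]
  rw [Fintype.prod_eq_mul_prod_compl j₀, update_self, hprod, Finset.piecewise_compl,
    Finset.piecewise_singleton, mul_comm]

end Tensors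

theorem DependsOnlyOn.apply_update {α : Type*} {d : ℕ} {n : Fin d → ℕ}
    {f : (∀ j, Fin (n j)) → α} {j : Fin d} (hf : DependsOnlyOn f {j}ᶜ) (x : ∀ j, Fin (n j))
    (s : Fin (n j)) : f (update x j s) = f x :=
  hf _ _ fun _ hj' => update_of_ne (by simpa using hj') _ _

theorem tensor_rank_le_prod_flattening {d : ℕ} (hd : 2 ≤ d)
    (n : Fin d → ℕ) (k : Fin d → ℕ) (T : (∀ j, Fin (n j)) → F)
    (h : ∀ j : Fin d, (j : ℕ) < d - 1 →
      ∃ (a : Fin (k j) → Fin (n j) → F)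
        (b : Fin (k j) → ((∀ j', Fin (n j')) → F)),
        (∀ i, DependsOnlyOn (b i) ({j}ᶜ)) ∧ ∀ x, T x = ∑ i, a i (x j) * b i x) :
    ∃ c : Fin (∏ j ∈ Finset.univ.filter (fun j : Fin d => (j : ℕ) < d - 1), k j) →
        ((j : Fin d) → Fin (n j) → F),
      ∀ x, T x = ∑ i, ∏ j, c i j (x j) := by
  let last : Fin d := ⟨d - 1, by omega⟩
  have hlt (j : Fin d) : (j : ℕ) < d - 1 ↔ j ≠ last := by
    simp only [Ne, Fin.ext_iff, last]
    omega
  have hfilter : Finset.univ.filter (fun j : Fin d => (j : ℕ) < d - 1) = {last}ᶜ := by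
    ext j
    simp [hlt]
  rw [hfilter]
  refine tensorRankLE_prod_of_flatteningRankLE k last fun j hj => ?_
  obtain ⟨a, b, hb, hab⟩ := h j ((hlt j).mpr hj)
  exact ⟨a, b, fun i => (hb i).apply_update, hab⟩
end

section
/- Let R = { {{1,2},{3,4}}, {{1,3},{2,4}} } be a family of partitions of [4], and let T : [n]⁴ → 𝔽 be defined by T(x₁,x₂,x₃,x₄) = 1 if x₁ = x₄ and x₂ = x₃, and 0 otherwise. Then the R-rank of T is at least n. That is, if Σ_{i=1}^r a_i(x₁,x₂) b_i(x₃,x₄) + Σ_{i=1}^s c_i(x₁,x₃) d_i(x₂,x₄) = T for all inputs, then r + s ≥ n. -/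
open Finset

variable {F : Type*} [Field F]

/-!
Fix `x₁ = x₄ = z`. Each summand `a i z x₂ * b i x₃ z` or `c i z x₃ * d i x₂ z` is then an
outer product in `(x₂, x₃)`, so the `n × n` identity matrix factors as `U * V` through an
index set of size `r + s`, and comparing ranks gives `n ≤ r + s`.
-/

namespace Matrix

theorem card_le_card_of_mul_eq_one {m k R : Type*} [Fintype m] [Fintype k] [DecidableEq m]
    [CommRing R] [StrongRankCondition R] {A : Matrix m k R} {B : Matrix k m R}
    (h : A * B = 1) : Fintype.card m ≤ Fintype.card k :=
  calc Fintype.card m = (A * B).rank := by rw [h, rank_one]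
    _ ≤ A.rank := rank_mul_le_left A B
    _ ≤ Fintype.card k := rank_le_card_width A

end Matrix

open Matrix in
theorem naslund_lower_bound_general {n r s : ℕ}
    (a b : Fin r → Fin n → Fin n → F) (c d : Fin s → Fin n → Fin n → F)
    (h : ∀ x₁ x₂ x₃ x₄ : Fin n,
      ∑ i, a i x₁ x₂ * b i x₃ x₄ + ∑ i, c i x₁ x₃ * d i x₂ x₄ =
        if x₁ = x₄ ∧ x₂ = x₃ then (1 : F) else 0) :
    n ≤ r + s := by
  rcases Nat.eq_zero_or_pos n with rfl | hn
  · exact Nat.zero_le _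
  let z : Fin n := ⟨0, hn⟩
  have factor_mul_eq_one : fromCols (of fun x₂ i => a i z x₂) (of fun x₂ i => d i x₂ z) *
      fromRows (of fun i x₃ => b i x₃ z) (of fun i x₃ => c i z x₃) = 1 := by
    ext x₂ x₃
    simpa [fromCols_mul_fromRows, mul_apply, one_apply, mul_comm (d _ x₂ z), eq_comm]
      using h z x₂ x₃ z
  simpa using card_le_card_of_mul_eq_one factor_mul_eq_one

theorem naslund_lower_bound {n r s : ℕ} (hn : 1 ≤ n)
    (a b : Fin r → Fin n → Fin n → F) (c d : Fin s → Fin n → Fin n → F)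
    (h : ∀ x₁ x₂ x₃ x₄ : Fin n,
      ∑ i, a i x₁ x₂ * b i x₃ x₄ + ∑ i, c i x₁ x₃ * d i x₂ x₄ =
        if x₁ = x₄ ∧ x₂ = x₃ then (1 : F) else 0) :
    n ≤ r + s :=
  naslund_lower_bound_general a b c d h
end

section
/- For every d ≥ 2 and n ≥ 1, the partition rank of the order-d identity tensor Δ_d : [n]^d → 𝔽, defined by Δ_d(x₁,…,x_d) = 1 if x₁ = ⋯ = x_d and 0 otherwise, is equal to n. -/
open Finset

variable {F : Type*} [Field F]

/-- `T` has partition rank at most 1. -/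
def PrRankOne {d n : ℕ} (T : (Fin d → Fin n) → F) : Prop :=
  ∃ J : Finset (Fin d), J.Nonempty ∧ J ≠ Finset.univ ∧
    ∃ a b : (Fin d → Fin n) → F,
      DependsOnlyOn (n := fun _ : Fin d => n) a J ∧
      DependsOnlyOn (n := fun _ : Fin d => n) b Jᶜ ∧
      ∀ x, T x = a x * b x

/-- `T` has partition rank at most `k`. -/
def PrRankLE {d n : ℕ} (T : (Fin d → Fin n) → F) (k : ℕ) : Prop :=
  ∃ c : Fin k → ((Fin d → Fin n) → F),
    (∀ i, PrRankOne (c i)) ∧ ∀ x, T x = ∑ i, c i x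


/-!
The upper bound is the decomposition `Δ = ∑ₜ [x = (t, …, t)]`, each summand splitting off the
first coordinate. For the lower bound we prove, by induction on the order, that a diagonal tensor
with weights `u` has partition rank at least `#(support u)`. Write each term of a decomposition
with its last coordinate on the `b`-side and contract the last coordinate against a vector `v`.
The weighted diagonal becomes the weighted diagonal with weights `v * u` of one order less; a term
whose `a`-side is all the other coordinates becomes `⟪v, g⟫ • a'` for a fixed `g`, and every other
term stays of partition rank one. Since a subspace of dimension `m` contains a vector with support
at least `m`, one can take `v` supported in `support u`, orthogonal to the `m` vectors `g`, with
`#(support v) ≥ #(support u) - m`.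
-/

theorem Submodule.exists_mem_finrank_le_card_support {ι : Type*} [Fintype ι] [DecidableEq F]
    (S : Submodule F (ι → F)) : ∃ v ∈ S, Module.finrank F S ≤ #{i | v i ≠ 0} := by
  classical
  obtain ⟨_, ⟨v, hvS, rfl⟩, hmax⟩ := Set.exists_max_image
    ((fun w : ι → F => ({i | w i ≠ 0} : Finset ι)) '' S) card (Set.toFinite _)
    ⟨_, 0, S.zero_mem, rfl⟩
  set B : Finset ι := {i | v i ≠ 0}
  refine ⟨v, hvS, ?_⟩
  -- A nonzero `w ∈ S` vanishing on the support of `v` would give `v + w` a larger support.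
  have hinj : Function.Injective (LinearMap.funLeft F F ((↑) : B → ι) ∘ₗ S.subtype) := by
    rw [← LinearMap.ker_eq_bot, LinearMap.ker_eq_bot']
    intro w hw
    by_contra hw0
    obtain ⟨i₀, hi₀⟩ : ∃ i₀, (w : ι → F) i₀ ≠ 0 := by
      by_contra! h
      exact hw0 (Subtype.ext (funext h))
    have hwB : ∀ i ∈ B, (w : ι → F) i = 0 := fun i hi => congrFun hw ⟨i, hi⟩
    have hi₀B : i₀ ∉ B := fun h => hi₀ (hwB i₀ h)
    have hsub : insert i₀ B ⊆ ({i | (v + w) i ≠ 0} : Finset ι) := by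
      intro i hi
      rcases mem_insert.mp hi with rfl | hi <;> simp_all [B]
    have := (card_le_card hsub).trans (hmax _ ⟨v + w, S.add_mem hvS w.2, rfl⟩)
    rw [card_insert_of_notMem hi₀B] at this
    exact Nat.not_succ_le_self _ this
  simpa using LinearMap.finrank_le_finrank_of_injective hinj

theorem exists_dotProduct_eq_zero_card_le {ι κ : Type*} [Fintype ι] [Fintype κ] [DecidableEq ι]
    [DecidableEq F] (A : Finset ι) (g : κ → ι → F) :
    ∃ v : ι → F, (∀ t, v t ≠ 0 → t ∈ A) ∧ (∀ i, v ⬝ᵥ g i = 0) ∧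
      #A ≤ #{t | v t ≠ 0} + Fintype.card κ := by
  let Φ := (LinearMap.funLeft F F ((↑) : (Aᶜ : Finset ι) → ι)).prod (Matrix.of g).mulVecLin
  obtain ⟨v, hvΦ, hv⟩ := Submodule.exists_mem_finrank_le_card_support (LinearMap.ker Φ)
  have hvA : ∀ t, v t ≠ 0 → t ∈ A := by
    intro t ht
    by_contra htA
    exact ht (congrFun (congrArg Prod.fst (LinearMap.mem_ker.mp hvΦ)) ⟨t, mem_compl.mpr htA⟩)
  have hvg : ∀ i, v ⬝ᵥ g i = 0 := by
    intro i
    rw [dotProduct_comm]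
    exact congrFun (congrArg Prod.snd (LinearMap.mem_ker.mp hvΦ)) i
  refine ⟨v, hvA, hvg, ?_⟩
  have hrange := Submodule.finrank_le (LinearMap.range Φ)
  have hrank := LinearMap.finrank_range_add_finrank_ker Φ
  simp only [Module.finrank_prod, Module.finrank_fintype_fun_eq_card, Fintype.card_coe]
    at hrange hrank
  have := card_add_card_compl A
  omega

def diagTensor {d n : ℕ} (u : Fin n → F) (x : Fin d → Fin n) : F :=
  ∑ t, if ∀ j, x j = t then u t else 0

theorem diagTensor_apply {d n : ℕ} (u : Fin n → F) (x : Fin (d + 1) → Fin n) :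
    diagTensor u x = if ∀ j₁ j₂, x j₁ = x j₂ then u (x 0) else 0 := by
  unfold diagTensor
  by_cases hx : ∀ j₁ j₂, x j₁ = x j₂
  · rw [if_pos hx, sum_eq_single (x 0)]
    · exact if_pos fun j => hx j 0
    · exact fun t _ ht => if_neg fun h => ht (h 0).symm
    · simp
  · rw [if_neg hx]
    exact sum_eq_zero fun t _ => if_neg fun h => hx fun j₁ j₂ => (h j₁).trans (h j₂).symm

def SplitsAlong {d n : ℕ} (T : (Fin d → Fin n) → F) (J : Finset (Fin d)) : Prop :=
  ∃ a b : (Fin d → Fin n) → F, DependsOnlyOn (n := fun _ => n) a J ∧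
    DependsOnlyOn (n := fun _ => n) b Jᶜ ∧ ∀ x, T x = a x * b x

theorem SplitsAlong.compl {d n : ℕ} {T : (Fin d → Fin n) → F} {J : Finset (Fin d)}
    (h : SplitsAlong T J) : SplitsAlong T Jᶜ := by
  obtain ⟨a, b, ha, hb, hT⟩ := h
  exact ⟨b, a, hb, by rwa [compl_compl], fun x => (hT x).trans (mul_comm _ _)⟩

theorem PrRankOne.one_lt {d n : ℕ} {T : (Fin d → Fin n) → F} (h : PrRankOne T) : 1 < d := by
  obtain ⟨J, ⟨j, hj⟩, hJ, -⟩ := h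
  by_contra! hd
  exact hJ (eq_univ_iff_forall.mpr fun i => by rwa [show i = j from Fin.ext (by omega)])

theorem PrRankOne.exists_splitsAlong_notMem {d n : ℕ} {T : (Fin d → Fin n) → F}
    (h : PrRankOne T) (j : Fin d) : ∃ J : Finset (Fin d), J.Nonempty ∧ j ∉ J ∧ SplitsAlong T J := by
  obtain ⟨J, hne, huniv, hs⟩ := h
  by_cases hj : j ∈ J
  · refine ⟨Jᶜ, ?_, notMem_compl.mpr hj, SplitsAlong.compl hs⟩
    rwa [nonempty_iff_ne_empty, Ne, compl_eq_empty_iff]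
  · exact ⟨J, hne, hj, hs⟩

theorem prRankLE_of_sum {d n : ℕ} {ι : Type*} {T : (Fin d → Fin n) → F} (s : Finset ι)
    (c : ι → (Fin d → Fin n) → F) (hc : ∀ i ∈ s, PrRankOne (c i))
    (hT : ∀ x, T x = ∑ i ∈ s, c i x) : PrRankLE T #s := by
  refine ⟨fun j => c (s.equivFin.symm j), fun j => hc _ (s.equivFin.symm j).2, fun x => ?_⟩
  rw [hT, ← sum_coe_sort s]
  exact (Equiv.sum_comp s.equivFin.symm fun i => c i x).symm

theorem prRankOne_ite_forall_eq {d n : ℕ} (hd : 2 ≤ d) (t : Fin n) (c : F) :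
    PrRankOne fun x : Fin d → Fin n => if ∀ j, x j = t then c else 0 := by
  set j₀ : Fin d := ⟨0, by omega⟩
  refine ⟨{j₀}, singleton_nonempty _, fun h => ?_, fun x => if x j₀ = t then c else 0,
    fun x => if ∀ j ∈ ({j₀} : Finset (Fin d))ᶜ, x j = t then 1 else 0, ?_, ?_, fun x => ?_⟩
  · have : (⟨1, by omega⟩ : Fin d) ∈ ({j₀} : Finset (Fin d)) := h ▸ mem_univ _
    simp [j₀, Fin.ext_iff] at this
  · intro x y hxy
    simp only [hxy j₀ (mem_singleton_self _)]
  · intro x y hxy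
    dsimp only
    congr 1
    exact propext <| forall₂_congr fun j hj => by rw [hxy j hj]
  · have : (∀ j, x j = t) ↔ x j₀ = t ∧ ∀ j ∈ ({j₀} : Finset (Fin d))ᶜ, x j = t := by
      refine ⟨fun h => ⟨h j₀, fun j _ => h j⟩, fun ⟨h₀, h⟩ j => ?_⟩
      by_cases hj : j = j₀
      · exact hj ▸ h₀
      · exact h j (by simpa using hj)
    simp only [this, ite_and]
    split_ifs <;> simp

theorem prRankLE_diagTensor {d n : ℕ} (hd : 2 ≤ d) (u : Fin n → F) :
    PrRankLE (diagTensor (d := d) u) n :=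
  ⟨fun t x => if ∀ j, x j = t then u t else 0, fun t => prRankOne_ite_forall_eq hd t (u t),
    fun _ => rfl⟩

def contractLast {d n : ℕ} (v : Fin n → F) (T : (Fin (d + 1) → Fin n) → F)
    (y : Fin d → Fin n) : F :=
  v ⬝ᵥ fun t => T (Fin.snoc y t)

theorem contractLast_diagTensor {d n : ℕ} (v u : Fin n → F) :
    contractLast v (diagTensor (d := d + 1) u) = diagTensor (v * u) := by
  funext y
  simp only [contractLast, diagTensor, dotProduct, Fin.forall_fin_succ', Fin.snoc_castSucc,
    Fin.snoc_last, mul_sum]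
  rw [sum_comm]
  refine sum_congr rfl fun s _ => ?_
  by_cases hy : ∀ j, y j = s <;> simp [hy]

theorem contractLast_sum {d n : ℕ} {ι : Type*} {T : (Fin (d + 1) → Fin n) → F} (v : Fin n → F)
    (s : Finset ι) (c : ι → (Fin (d + 1) → Fin n) → F) (hT : ∀ x, T x = ∑ i ∈ s, c i x)
    (y : Fin d → Fin n) : contractLast v T y = ∑ i ∈ s, contractLast v (c i) y := by
  simp only [contractLast, dotProduct, hT, mul_sum]
  exact sum_comm

theorem DependsOnlyOn.snoc_eq {α : Type*} {d n : ℕ} {f : (Fin (d + 1) → Fin n) → α}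
    {J : Finset (Fin (d + 1))} (hf : DependsOnlyOn (n := fun _ => n) f J)
    {x z : Fin d → Fin n} {s t : Fin n}
    (hxz : ∀ j, j.castSucc ∈ J → x j = z j) (hst : Fin.last d ∈ J → s = t) :
    f (Fin.snoc x s) = f (Fin.snoc z t) := by
  refine hf _ _ fun j hj => ?_
  induction j using Fin.lastCases with
  | last => simpa using hst hj
  | cast j => simpa using hxz j hj

theorem SplitsAlong.contractLast_castSucc {d n : ℕ} {T : (Fin (d + 2) → Fin n) → F}
    {J : Finset (Fin (d + 2))} (h : SplitsAlong T J) (hJ : Fin.last _ ∉ J) (v : Fin n → F) :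
    SplitsAlong (contractLast v T) {j | j.castSucc ∈ J} := by
  obtain ⟨a, b, ha, hb, hT⟩ := h
  -- `a` ignores the last coordinate, so any value (here `y 0`) may be put there.
  refine ⟨fun y => a (Fin.snoc y (y 0)), contractLast v b, fun x z hxz => ?_,
    fun x z hxz => ?_, fun y => ?_⟩
  · exact ha.snoc_eq (fun j hj => hxz j (by simpa using hj)) (absurd · hJ)
  · exact congrArg (dotProduct v) <| funext fun t =>
      hb.snoc_eq (fun j hj => hxz j (by simpa using hj)) fun _ => rfl
  · simp only [contractLast, dotProduct, hT, mul_sum]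
    refine sum_congr rfl fun t _ => ?_
    rw [ha.snoc_eq (fun _ _ => rfl) (absurd · hJ)]
    ring

theorem prRankOne_contractLast {d n : ℕ} {T : (Fin (d + 2) → Fin n) → F}
    {J : Finset (Fin (d + 2))} (h : SplitsAlong T J) (hne : J.Nonempty) (hJ : Fin.last _ ∉ J)
    (hJc : J ≠ {Fin.last _}ᶜ) (v : Fin n → F) : PrRankOne (contractLast v T) := by
  refine ⟨_, ?_, fun huniv => hJc ?_, h.contractLast_castSucc hJ v⟩
  · obtain ⟨j, hj⟩ := hne
    obtain ⟨i, rfl⟩ := Fin.exists_castSucc_eq.mpr (ne_of_mem_of_not_mem hj hJ)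
    exact ⟨i, by simpa using hj⟩
  · ext j
    induction j using Fin.lastCases with
    | last => simpa using hJ
    | cast i => simpa using eq_univ_iff_forall.mp huniv i

theorem SplitsAlong.exists_contractLast_eq_zero {d n : ℕ} {T : (Fin (d + 2) → Fin n) → F}
    (h : SplitsAlong T {Fin.last _}ᶜ) :
    ∃ g : Fin n → F, ∀ v, v ⬝ᵥ g = 0 → contractLast v T = 0 := by
  obtain ⟨a, b, ha, hb, hT⟩ := h
  refine ⟨fun t => b fun _ => t, fun v hv => funext fun y => ?_⟩
  have hbt : ∀ t, b (Fin.snoc y t) = b fun _ => t :=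
    fun t => hb _ _ fun j hj => by simp only [compl_compl, mem_singleton] at hj; simp [hj]
  calc contractLast v T y = (v ⬝ᵥ fun t => b fun _ => t) * a (Fin.snoc y (y 0)) := by
        simp only [contractLast, dotProduct, hT, sum_mul, hbt]
        refine sum_congr rfl fun t _ => ?_
        rw [ha.snoc_eq (fun _ _ => rfl) (by simp)]
        ring
    _ = 0 := by rw [hv, zero_mul]

theorem PrRankLE.exists_contractLast {d n k : ℕ} [DecidableEq F] {T : (Fin (d + 2) → Fin n) → F}
    (h : PrRankLE T k) (A : Finset (Fin n)) :
    ∃ v : Fin n → F, (∀ t, v t ≠ 0 → t ∈ A) ∧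
      ∃ l, PrRankLE (contractLast v T) l ∧ #A + l ≤ #{t | v t ≠ 0} + k := by
  obtain ⟨c, hc, hT⟩ := h
  choose J hJne hJlast hJ using fun i => (hc i).exists_splitsAlong_notMem (Fin.last _)
  set M : Finset (Fin k) := {i | J i = {Fin.last _}ᶜ}
  choose g hg using fun i : M => (mem_filter.mp i.2).2 ▸ hJ i |>.exists_contractLast_eq_zero
  obtain ⟨v, hvA, hvg, hcard⟩ := exists_dotProduct_eq_zero_card_le A g
  refine ⟨v, hvA, #Mᶜ, prRankLE_of_sum Mᶜ _
    (fun i hi => prRankOne_contractLast (hJ i) (hJne i) (hJlast i) (by simpa [M] using hi) v)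
    fun y => ?_, ?_⟩
  · rw [contractLast_sum v univ c (fun x => hT x) y]
    refine (sum_subset (subset_univ _) fun i _ hi => ?_).symm
    rw [hg ⟨i, by simpa using hi⟩ v (hvg _)]
    rfl
  · have := card_add_card_compl M
    simp only [Fintype.card_coe, Fintype.card_fin] at hcard this
    omega

theorem card_support_le_of_prRankLE_diagTensor {n : ℕ} [DecidableEq F] :
    ∀ {d : ℕ} (u : Fin n → F) {k : ℕ}, PrRankLE (diagTensor (d := d + 1) u) k →
      #{t | u t ≠ 0} ≤ k
  | 0, u, 0, ⟨_, _, hT⟩ => by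
    have hu : ∀ t, u t = 0 := fun t => by simpa [diagTensor_apply] using hT fun _ => t
    simp [hu]
  | 0, _, _ + 1, ⟨_, hc, _⟩ => absurd (hc 0).one_lt (lt_irrefl 1)
  | d + 1, u, k, h => by
    obtain ⟨v, hvu, l, hl, hcard⟩ := h.exists_contractLast {t | u t ≠ 0}
    rw [contractLast_diagTensor] at hl
    have hsupp : #{t | (v * u) t ≠ 0} = #{t | v t ≠ 0} := by
      congr 1
      ext t
      simpa using fun hv => by simpa using hvu t hv
    have := card_support_le_of_prRankLE_diagTensor (v * u) hl
    rw [hsupp] at this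
    omega

theorem partition_rank_identity_general {d n : ℕ} (hd : 2 ≤ d) :
    PrRankLE (fun x : Fin d → Fin n =>
        if ∀ j₁ j₂ : Fin d, x j₁ = x j₂ then (1 : F) else 0) n ∧
    ∀ k : ℕ, PrRankLE (fun x : Fin d → Fin n =>
        if ∀ j₁ j₂ : Fin d, x j₁ = x j₂ then (1 : F) else 0) k → n ≤ k := by
  classical
  obtain ⟨d, rfl⟩ : ∃ e, d = e + 1 := ⟨d - 1, by omega⟩
  have hΔ : (fun x : Fin (d + 1) → Fin n =>
      if ∀ j₁ j₂ : Fin (d + 1), x j₁ = x j₂ then (1 : F) else 0) = diagTensor 1 :=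
    funext fun x => (diagTensor_apply 1 x).symm
  rw [hΔ]
  refine ⟨prRankLE_diagTensor hd 1, fun k hk => ?_⟩
  simpa using card_support_le_of_prRankLE_diagTensor 1 hk

theorem partition_rank_identity {d n : ℕ} (hd : 2 ≤ d) (hn : 1 ≤ n) :
    PrRankLE (fun x : Fin d → Fin n =>
        if ∀ j₁ j₂ : Fin d, x j₁ = x j₂ then (1 : F) else 0) n ∧
    ∀ k : ℕ, PrRankLE (fun x : Fin d → Fin n =>
        if ∀ j₁ j₂ : Fin d, x j₁ = x j₂ then (1 : F) else 0) k → n ≤ k :=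
  partition_rank_identity_general hd
end

section
/- Let d ≥ 2, let Q be a partition of [d], and let P be a partition of [d] that is not finer than Q. Then the tensor Δ_P : [n]^d → 𝔽 has {Q}-rank at least n, i.e., whenever Σ_{i=1}^k ∏_{J∈Q} a_{J,i}(x(J)) = Δ_P(x) for all x ∈ [n]^d, we have k ≥ n. -/
open Finset

variable {F : Type*} [Field F]

/-!
Choose a part `J` of `P` that meets a part `K` of `Q` without lying inside it, and restrict to
the points taking one value `u` on `K` and another value `v` off `K`. There `Δ_P` becomes the
`n × n` identity matrix, while each `{Q}`-rank-one summand becomes an outer product `f u * g v`,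
since every part of `Q` other than `K` only sees `v`. So `k` summands give a matrix of rank at most
`k`, and the identity has rank `n`.
-/

theorem Matrix.rank_le_of_apply_eq_sum_mul {R m n : Type*} [CommSemiring R] [StrongRankCondition R]
    [Fintype n] {k : ℕ} {M : Matrix m n R} (f : Fin k → m → R) (g : Fin k → n → R)
    (hM : ∀ u v, M u v = ∑ i, f i u * g i v) :
    M.rank ≤ k := by
  have hfactor : M = Matrix.of (fun u i => f i u) * Matrix.of g := by
    ext u v
    simp [Matrix.mul_apply, hM]
  rw [hfactor]
  exact (Matrix.rank_mul_le_left _ _).trans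
    ((Matrix.rank_le_card_width _).trans_eq (Fintype.card_fin k))

theorem exists_part_inter_nonempty_sdiff_nonempty {d : ℕ} {P Q : Finset (Finset (Fin d))}
    (hP : ∀ J ∈ P, J.Nonempty) (hQ : Q.sup id = univ) (hPQ : ¬ Finer P Q) :
    ∃ J ∈ P, ∃ K ∈ Q, (J ∩ K).Nonempty ∧ (J \ K).Nonempty := by
  simp only [Finer, not_forall, not_exists, not_and] at hPQ
  obtain ⟨J, hJ, hJQ⟩ := hPQ
  obtain ⟨j, hj⟩ := hP J hJ
  obtain ⟨K, hK, hjK⟩ := mem_sup.mp (hQ ▸ mem_univ j : j ∈ Q.sup id)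
  exact ⟨J, hJ, K, hK, ⟨j, mem_inter.mpr ⟨hj, hjK⟩⟩, sdiff_nonempty.mpr (hJQ K hK)⟩

theorem deltaP_piecewise {d n : ℕ} {P : Finset (Finset (Fin d))} {J K : Finset (Fin d)}
    (hJ : J ∈ P) (hJK : (J ∩ K).Nonempty) (hJK' : (J \ K).Nonempty) (u v : Fin n) :
    (DeltaP P (K.piecewise (fun _ => u) (fun _ => v)) : F) = if u = v then 1 else 0 := by
  obtain ⟨j₁, hj₁⟩ := hJK
  obtain ⟨j₂, hj₂⟩ := hJK'
  rw [mem_inter] at hj₁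
  rw [mem_sdiff] at hj₂
  by_cases huv : u = v
  · subst huv
    simp [DeltaP, piecewise]
  · have hcut : ¬ ∀ J ∈ P, ∀ i ∈ J, ∀ i' ∈ J,
        K.piecewise (fun _ => u) (fun _ => v) i = K.piecewise (fun _ => u) (fun _ => v) i' :=
      fun hall => huv <| by
        simpa [piecewise_eq_of_mem _ _ _ hj₁.2, piecewise_eq_of_notMem _ _ _ hj₂.2]
          using hall J hJ j₁ hj₁.1 j₂ hj₂.1
    simp only [DeltaP, if_neg hcut, if_neg huv]

theorem RankOne.exists_apply_piecewise_eq_mul {d n : ℕ} {Q : Finset (Finset (Fin d))}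
    (hQ : ∀ J ∈ Q, ∀ K ∈ Q, J ≠ K → Disjoint J K) {K : Finset (Fin d)} (hK : K ∈ Q)
    {T : (Fin d → Fin n) → F} (hT : RankOne (n := fun _ => n) {Q} T) :
    ∃ f g : Fin n → F, ∀ u v, T (K.piecewise (fun _ => u) (fun _ => v)) = f u * g v := by
  obtain ⟨Q', hQ', a, ha, hTa⟩ := hT
  rw [mem_singleton] at hQ'
  subst hQ'
  refine ⟨fun u => a K fun _ => u, fun v => ∏ J ∈ Q'.erase K, a J fun _ => v, fun u v => ?_⟩
  rw [hTa, ← mul_prod_erase Q' _ hK]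
  congr 1
  · exact ha K hK _ _ fun j hj => piecewise_eq_of_mem _ _ _ hj
  · refine prod_congr rfl fun J hJ => ha J (mem_of_mem_erase hJ) _ _ fun j hj => ?_
    have hdisj := hQ J (mem_of_mem_erase hJ) K hK (ne_of_mem_erase hJ)
    exact piecewise_eq_of_notMem _ _ _ (disjoint_left.mp hdisj hj)

theorem RRankLE.rank_piecewise_le {d n : ℕ} {Q : Finset (Finset (Fin d))}
    (hQ : ∀ J ∈ Q, ∀ K ∈ Q, J ≠ K → Disjoint J K) {K : Finset (Fin d)} (hK : K ∈ Q)
    {T : (Fin d → Fin n) → F} {k : ℕ} (hT : RRankLE (n := fun _ => n) {Q} T k) :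
    (Matrix.of fun u v => T (K.piecewise (fun _ => u) (fun _ => v))).rank ≤ k := by
  obtain ⟨c, hc, hTc⟩ := hT
  choose f g hfg using fun i => (hc i).exists_apply_piecewise_eq_mul hQ hK
  exact Matrix.rank_le_of_apply_eq_sum_mul f g fun u v => by simp [hTc, hfg]

theorem deltaP_singleQ_lower_bound_general {d n : ℕ}
    (P Q : Finset (Finset (Fin d)))
    (hP : IsPartitionOn d P) (hQ : IsPartitionOn d Q)
    (hfin : ¬ Finer P Q) (k : ℕ)
    (h : RRankLE (n := fun _ => n) ({Q} : Finset (Finset (Finset (Fin d))))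
      (DeltaP P : (Fin d → Fin n) → F) k) :
    n ≤ k := by
  obtain ⟨J, hJ, K, hK, hJK, hJK'⟩ := exists_part_inter_nonempty_sdiff_nonempty hP.1 hQ.2.2 hfin
  have hid : (Matrix.of fun u v : Fin n =>
      (DeltaP P (K.piecewise (fun _ => u) (fun _ => v)) : F)) = 1 := by
    ext u v
    simp [deltaP_piecewise hJ hJK hJK', Matrix.one_apply]
  simpa [hid, Matrix.rank_one] using h.rank_piecewise_le hQ.2.1 hK

theorem deltaP_singleQ_lower_bound {d n : ℕ} (hd : 2 ≤ d) (hn : 1 ≤ n)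
    (P Q : Finset (Finset (Fin d)))
    (hP : IsPartitionOn d P) (hQ : IsPartitionOn d Q)
    (hfin : ¬ Finer P Q) (k : ℕ)
    (h : RRankLE (n := fun _ => n) ({Q} : Finset (Finset (Finset (Fin d))))
      (DeltaP P : (Fin d → Fin n) → F) k) :
    n ≤ k :=
  deltaP_singleQ_lower_bound_general P Q hP hQ hfin k h
end

section
/- Let d ≥ 2 and let P, Q be two partitions of [d]. If T : [n₁] × ⋯ × [n_d] → 𝔽 is an order-d tensor with {P}-rank at most r and {Q}-rank at most s, then T has {P ∧ Q}-rank at most (rs)^{|P|}, where P ∧ Q is the least common refinement of P and Q; in particular the {P ∧ Q}-rank of T is at most (rs)^d. -/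
open Finset

variable {F : Type*} [Field F]

/-!
For each part `J` of `P`, the `J`-slices of `T` (the coordinates outside `J` frozen) span a space
`V_J` of dimension at most `r`, since every such slice is a combination of the `r` factors
`a i J` of the `{P}`-decomposition `T = ∑ i, ∏ J ∈ P, a i J`. Projecting every factor `a i J`
onto `V_J` does not change `T`, so `T` lies in the span of the products `∏ J ∈ P, e J` with each
`e J` taken from a basis of `V_J` made of slices of `T`: at most `r ^ #P` products. Restricting
the `{Q}`-decomposition of `T` to a `J`-slice writes it as a sum of `s` products of functions of
the coordinates in `J ∩ K`, `K ∈ Q`, so each of those products has `{P ∧ Q}`-rank at most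
`s ^ #P`.
-/

open scoped Pointwise

theorem exists_finset_subset_card_le_span_eq {K V ι : Type*} [DivisionRing K] [AddCommGroup V]
    [Module K V] [Fintype ι] {S : Set V} (v : ι → V)
    (hS : Submodule.span K S ≤ Submodule.span K (Set.range v)) :
    ∃ E : Finset V, ↑E ⊆ S ∧ E.card ≤ Fintype.card ι ∧
      Submodule.span K ↑E = Submodule.span K S := by
  have := FiniteDimensional.span_of_finite K (Set.finite_range v)
  have := Submodule.finiteDimensional_of_le hS
  obtain ⟨E, hES, hcard, hspan, -⟩ := Submodule.exists_finset_span_eq_linearIndepOn K S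
  exact ⟨E, hES, hcard ▸ (Submodule.finrank_mono hS).trans (finrank_range_le_card v), hspan⟩

theorem prod_mem_span_prod {K A ι : Type*} [CommSemiring K] [CommSemiring A] [Algebra K A]
    [DecidableEq A] {s : Finset ι} {E : ι → Finset A} {f : ι → A}
    (hf : ∀ i ∈ s, f i ∈ Submodule.span K (E i : Set A)) :
    ∏ i ∈ s, f i ∈ Submodule.span K ↑(∏ i ∈ s, E i) := by
  rw [Finset.coe_prod, ← Submodule.prod_span]
  refine Finset.prod_le_prod' (fun i hi => (Submodule.span_singleton_le_iff_mem _ _).2 (hf i hi)) ?_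
  rw [Submodule.prod_span_singleton]
  exact Submodule.mem_span_singleton_self _

theorem card_finsetProd_le {α ι : Type*} [CommMonoid α] [DecidableEq α] (s : Finset ι)
    (E : ι → Finset α) : (∏ i ∈ s, E i).card ≤ ∏ i ∈ s, (E i).card :=
  Finset.le_prod_of_submultiplicative Finset.card (by simp) (fun _ _ => Finset.card_mul_le) s E

section Slices

variable {d : ℕ} {n : Fin d → ℕ} {β : Type*}

theorem DependsOnlyOn.mono {f : (∀ j, Fin (n j)) → β} {J K : Finset (Fin d)}
    (hf : DependsOnlyOn f J) (hJK : J ⊆ K) : DependsOnlyOn f K :=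
  fun x y hxy => hf x y fun j hj => hxy j (hJK hj)

theorem dependsOnlyOn_const (c : β) (J : Finset (Fin d)) :
    DependsOnlyOn (fun _ : ∀ j, Fin (n j) => c) J :=
  fun _ _ _ => rfl

theorem dependsOnlyOn_prod [CommMonoid β] {ι : Type*} {s : Finset ι}
    {f : ι → (∀ j, Fin (n j)) → β} {J : Finset (Fin d)} (hf : ∀ i ∈ s, DependsOnlyOn (f i) J) :
    DependsOnlyOn (∏ i ∈ s, f i) J := fun x y hxy => by
  simp only [Finset.prod_apply]
  exact Finset.prod_congr rfl fun i hi => hf i hi x y hxy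

theorem DependsOnlyOn.of_mem_span {S : Set ((∀ j, Fin (n j)) → F)} {J : Finset (Fin d)}
    (hS : ∀ g ∈ S, DependsOnlyOn g J) {f : (∀ j, Fin (n j)) → F}
    (hf : f ∈ Submodule.span F S) : DependsOnlyOn f J := by
  induction hf using Submodule.span_induction with
  | mem g hg => exact hS g hg
  | zero => exact dependsOnlyOn_const 0 J
  | add g h _ _ hg hh => exact fun x y hxy => by simp only [Pi.add_apply, hg x y hxy, hh x y hxy]
  | smul c g _ hg => exact fun x y hxy => by simp only [Pi.smul_apply, hg x y hxy]

def sliceThrough (J : Finset (Fin d)) (z : ∀ j, Fin (n j)) (f : (∀ j, Fin (n j)) → β) :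
    (∀ j, Fin (n j)) → β :=
  fun x => f (J.piecewise x z)

theorem sliceThrough_apply_self (J : Finset (Fin d)) (z : ∀ j, Fin (n j))
    (f : (∀ j, Fin (n j)) → β) : sliceThrough J z f z = f z := by
  simp only [sliceThrough, Finset.piecewise_same]

theorem dependsOnlyOn_sliceThrough_inter {f : (∀ j, Fin (n j)) → β} {K : Finset (Fin d)}
    (hf : DependsOnlyOn f K) (J : Finset (Fin d)) (z : ∀ j, Fin (n j)) :
    DependsOnlyOn (sliceThrough J z f) (J ∩ K) := fun x y hxy => by
  refine hf _ _ fun j hj => ?_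
  by_cases hjJ : j ∈ J
  · simp only [Finset.piecewise_eq_of_mem _ _ _ hjJ, hxy j (Finset.mem_inter.2 ⟨hjJ, hj⟩)]
  · simp only [Finset.piecewise_eq_of_notMem _ _ _ hjJ]

theorem dependsOnlyOn_sliceThrough (f : (∀ j, Fin (n j)) → β) (J : Finset (Fin d))
    (z : ∀ j, Fin (n j)) : DependsOnlyOn (sliceThrough J z f) J := by
  simpa using dependsOnlyOn_sliceThrough_inter (K := Finset.univ) (fun x y h => by
    rw [funext fun j => h j (Finset.mem_univ j)]) J z

theorem sliceThrough_eq_self {f : (∀ j, Fin (n j)) → β} {J : Finset (Fin d)}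
    (hf : DependsOnlyOn f J) (z : ∀ j, Fin (n j)) : sliceThrough J z f = f :=
  funext fun _ => hf _ _ fun _ hj => Finset.piecewise_eq_of_mem _ _ _ hj

theorem sliceThrough_eq_const {f : (∀ j, Fin (n j)) → β} {J : Finset (Fin d)}
    (hf : DependsOnlyOn f Jᶜ) (z : ∀ j, Fin (n j)) : sliceThrough J z f = fun _ => f z :=
  funext fun _ => hf _ _ fun _ hj =>
    Finset.piecewise_eq_of_notMem _ _ _ (Finset.mem_compl.1 hj)

theorem sliceThrough_sum_mul {ι : Type*} [Fintype ι] {J : Finset (Fin d)}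
    {f g : ι → (∀ j, Fin (n j)) → F} (hf : ∀ i, DependsOnlyOn (f i) J)
    (hg : ∀ i, DependsOnlyOn (g i) Jᶜ) (z : ∀ j, Fin (n j)) :
    sliceThrough J z (∑ i, f i * g i) = ∑ i, g i z • f i := by
  funext x
  have hfx := fun i => congrFun (sliceThrough_eq_self (hf i) z) x
  have hgx := fun i => congrFun (sliceThrough_eq_const (hg i) z) x
  simp only [sliceThrough] at hfx hgx
  simp only [sliceThrough, Finset.sum_apply, Pi.mul_apply, Pi.smul_apply, smul_eq_mul, hfx, hgx,
    mul_comm]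

def sliceSpan (J : Finset (Fin d)) (f : (∀ j, Fin (n j)) → F) :
    Submodule F ((∀ j, Fin (n j)) → F) :=
  Submodule.span F (Set.range fun z => sliceThrough J z f)

theorem sliceThrough_mem_sliceSpan (J : Finset (Fin d)) (z : ∀ j, Fin (n j))
    (f : (∀ j, Fin (n j)) → F) : sliceThrough J z f ∈ sliceSpan J f :=
  Submodule.subset_span ⟨z, rfl⟩

theorem DependsOnlyOn.of_mem_sliceSpan {J : Finset (Fin d)} {f g : (∀ j, Fin (n j)) → F}
    (hg : g ∈ sliceSpan J f) : DependsOnlyOn g J :=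
  DependsOnlyOn.of_mem_span (by rintro _ ⟨z, rfl⟩; exact dependsOnlyOn_sliceThrough f J z) hg

theorem sliceSpan_sum_mul_le {ι : Type*} [Fintype ι] {J : Finset (Fin d)}
    {f g : ι → (∀ j, Fin (n j)) → F} (hf : ∀ i, DependsOnlyOn (f i) J)
    (hg : ∀ i, DependsOnlyOn (g i) Jᶜ) :
    sliceSpan J (∑ i, f i * g i) ≤ Submodule.span F (Set.range f) := by
  refine Submodule.span_le.2 ?_
  rintro _ ⟨z, rfl⟩
  dsimp only
  rw [SetLike.mem_coe, sliceThrough_sum_mul hf hg z]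
  exact Submodule.sum_mem _ fun i _ => Submodule.smul_mem _ _ (Submodule.subset_span ⟨i, rfl⟩)

/-- Projecting every `f i` onto the span of the `J`-slices leaves the sum unchanged: the projection
fixes each slice `∑ i, g i z • f i`, and the sum takes at `z` the value of its slice through `z`. -/
theorem exists_sum_mul_eq_of_mem_sliceSpan {ι : Type*} [Fintype ι] {J : Finset (Fin d)}
    {f g : ι → (∀ j, Fin (n j)) → F} (hf : ∀ i, DependsOnlyOn (f i) J)
    (hg : ∀ i, DependsOnlyOn (g i) Jᶜ) :
    ∃ f' : ι → (∀ j, Fin (n j)) → F, (∀ i, f' i ∈ sliceSpan J (∑ i, f i * g i)) ∧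
      ∑ i, f' i * g i = ∑ i, f i * g i := by
  set V := sliceSpan J (∑ i, f i * g i)
  obtain ⟨W, hVW⟩ := V.exists_isCompl
  set π := V.projectionOnto W hVW
  refine ⟨fun i => π (f i), fun i => (π (f i)).2, funext fun z => ?_⟩
  have hslice : sliceThrough J z (∑ i, f i * g i) =
      ∑ i, g i z • (π (f i) : (∀ j, Fin (n j)) → F) := by
    have h := congrArg Subtype.val
      (Submodule.projectionOnto_apply_left hVW ⟨_, sliceThrough_mem_sliceSpan J z _⟩)
    simpa only [sliceThrough_sum_mul hf hg z, map_sum, map_smul, Submodule.coe_sum,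
      Submodule.coe_smul] using h.symm
  rw [← sliceThrough_apply_self J z (∑ i, f i * g i), hslice]
  simp only [Finset.sum_apply, Pi.smul_apply, Pi.mul_apply, smul_eq_mul, mul_comm]

end Slices

section Parts

variable {d : ℕ} {n : Fin d → ℕ}

theorem dependsOnlyOn_compl_prod_erase {β : Type*} [CommMonoid β]
    {P : Finset (Finset (Fin d))} (hP : (P : Set (Finset (Fin d))).Pairwise Disjoint)
    {a : Finset (Fin d) → (∀ j, Fin (n j)) → β} (ha : ∀ K ∈ P, DependsOnlyOn (a K) K)
    {J : Finset (Fin d)} (hJ : J ∈ P) : DependsOnlyOn (∏ K ∈ P.erase J, a K) Jᶜ :=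
  dependsOnlyOn_prod fun K hK =>
    (ha K (Finset.mem_of_mem_erase hK)).mono <| le_compl_iff_disjoint_right.2 <|
      hP (Finset.mem_of_mem_erase hK) hJ (Finset.ne_of_mem_erase hK)

variable {ι : Type*} [Fintype ι] {P : Finset (Finset (Fin d))}
  {a : ι → Finset (Fin d) → (∀ j, Fin (n j)) → F}

theorem sliceSpan_sum_prod_le (hP : (P : Set (Finset (Fin d))).Pairwise Disjoint)
    (ha : ∀ i, ∀ J ∈ P, DependsOnlyOn (a i J) J) {J : Finset (Fin d)} (hJ : J ∈ P) :
    sliceSpan J (∑ i, ∏ K ∈ P, a i K) ≤ Submodule.span F (Set.range fun i => a i J) := by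
  simp only [← Finset.mul_prod_erase P _ hJ]
  exact sliceSpan_sum_mul_le (fun i => ha i J hJ)
    fun i => dependsOnlyOn_compl_prod_erase hP (ha i) hJ

theorem exists_sum_prod_update_eq (hP : (P : Set (Finset (Fin d))).Pairwise Disjoint)
    (ha : ∀ i, ∀ J ∈ P, DependsOnlyOn (a i J) J) {J : Finset (Fin d)} (hJ : J ∈ P) :
    ∃ f : ι → (∀ j, Fin (n j)) → F, (∀ i, f i ∈ sliceSpan J (∑ i, ∏ K ∈ P, a i K)) ∧
      ∑ i, ∏ K ∈ P, Function.update (a i) J (f i) K = ∑ i, ∏ K ∈ P, a i K := by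
  have hsplit : ∀ b : Finset (Fin d) → (∀ j, Fin (n j)) → F,
      ∏ K ∈ P, b K = b J * ∏ K ∈ P.erase J, b K := fun b => (Finset.mul_prod_erase P b hJ).symm
  have hupdate : ∀ i (f : (∀ j, Fin (n j)) → F),
      ∏ K ∈ P.erase J, Function.update (a i) J f K = ∏ K ∈ P.erase J, a i K :=
    fun i f => Finset.prod_congr rfl fun K hK =>
      Function.update_of_ne (Finset.ne_of_mem_erase hK) _ _
  simp only [hsplit, hupdate, Function.update_self]
  exact exists_sum_mul_eq_of_mem_sliceSpan (fun i => ha i J hJ)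
    fun i => dependsOnlyOn_compl_prod_erase hP (ha i) hJ

theorem exists_sum_prod_eq_of_mem_sliceSpan (hP : (P : Set (Finset (Fin d))).Pairwise Disjoint)
    (ha : ∀ i, ∀ J ∈ P, DependsOnlyOn (a i J) J) :
    ∃ a' : ι → Finset (Fin d) → (∀ j, Fin (n j)) → F,
      (∀ i, ∀ J ∈ P, a' i J ∈ sliceSpan J (∑ i, ∏ K ∈ P, a i K)) ∧
      ∑ i, ∏ J ∈ P, a' i J = ∑ i, ∏ J ∈ P, a i J := by
  set T := ∑ i, ∏ K ∈ P, a i K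
  suffices h : ∀ S ⊆ P, ∃ a' : ι → Finset (Fin d) → (∀ j, Fin (n j)) → F,
      (∀ i, ∀ J ∈ P, DependsOnlyOn (a' i J) J) ∧ (∀ i, ∀ J ∈ S, a' i J ∈ sliceSpan J T) ∧
      ∑ i, ∏ J ∈ P, a' i J = T by
    obtain ⟨a', -, hmem, hsum⟩ := h P subset_rfl
    exact ⟨a', hmem, hsum⟩
  intro S hS
  induction S using Finset.induction_on with
  | empty => exact ⟨a, ha, by simp, rfl⟩
  | insert J S hJS ih =>
    obtain ⟨a', ha'dep, ha'mem, ha'sum⟩ := ih ((Finset.subset_insert J S).trans hS)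
    have hJ : J ∈ P := hS (Finset.mem_insert_self J S)
    obtain ⟨f, hfmem, hfsum⟩ := exists_sum_prod_update_eq hP ha'dep hJ
    rw [ha'sum] at hfmem hfsum
    refine ⟨fun i => Function.update (a' i) J (f i), fun i K hK => ?_, fun i K hK => ?_, hfsum⟩
    · rcases eq_or_ne K J with rfl | hKJ
      · simpa using DependsOnlyOn.of_mem_sliceSpan (hfmem i)
      · simpa [hKJ] using ha'dep i K hK
    · rcases eq_or_ne K J with rfl | hKJ
      · simpa using hfmem i
      · simpa [hKJ] using ha'mem i K ((Finset.mem_insert.1 hK).resolve_left hKJ)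

end Parts

theorem exists_slices_sum_prod_mem_span_prod [DecidableEq F] {d : ℕ} {n : Fin d → ℕ} {ι : Type*}
    [Fintype ι]
    {P : Finset (Finset (Fin d))} (hP : (P : Set (Finset (Fin d))).Pairwise Disjoint)
    {a : ι → Finset (Fin d) → (∀ j, Fin (n j)) → F} (ha : ∀ i, ∀ J ∈ P, DependsOnlyOn (a i J) J) :
    ∃ E : Finset (Fin d) → Finset ((∀ j, Fin (n j)) → F),
      (∀ J ∈ P, (E J).card ≤ Fintype.card ι ∧
        ∀ e ∈ E J, ∃ z, sliceThrough J z (∑ i, ∏ K ∈ P, a i K) = e) ∧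
      ∑ i, ∏ J ∈ P, a i J ∈ Submodule.span F ↑(∏ J ∈ P, E J) := by
  classical
  have hE : ∀ J ∈ P, ∃ E : Finset ((∀ j, Fin (n j)) → F),
      ↑E ⊆ Set.range (fun z => sliceThrough J z (∑ i, ∏ K ∈ P, a i K)) ∧
      E.card ≤ Fintype.card ι ∧ Submodule.span F ↑E = sliceSpan J (∑ i, ∏ K ∈ P, a i K) :=
    fun J hJ => exists_finset_subset_card_le_span_eq _ (sliceSpan_sum_prod_le hP ha hJ)
  choose! E hEslices hEcard hEspan using hE
  obtain ⟨a', ha'mem, ha'sum⟩ := exists_sum_prod_eq_of_mem_sliceSpan hP ha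
  refine ⟨E, fun J hJ => ⟨hEcard J hJ, fun e he => hEslices J hJ he⟩, ?_⟩
  rw [← ha'sum]
  exact Submodule.sum_mem _ fun i _ =>
    prod_mem_span_prod fun J hJ => (hEspan J hJ).symm ▸ ha'mem i J hJ

section Rank

variable {d : ℕ} {n : Fin d → ℕ}

theorem rrankLE_iff {R : Finset (Finset (Finset (Fin d)))} {f : (∀ j, Fin (n j)) → F} {k : ℕ} :
    RRankLE R f k ↔ ∃ c : Fin k → (∀ j, Fin (n j)) → F, (∀ i, RankOne R (c i)) ∧ f = ∑ i, c i := by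
  simp only [RRankLE, funext_iff, Finset.sum_apply]

theorem RankOne.rrankLE_one {R : Finset (Finset (Finset (Fin d)))} {f : (∀ j, Fin (n j)) → F}
    (hf : RankOne R f) : RRankLE R f 1 :=
  rrankLE_iff.2 ⟨fun _ => f, fun _ => hf, by simp⟩

theorem RRankLE.add {R : Finset (Finset (Finset (Fin d)))} {f g : (∀ j, Fin (n j)) → F}
    {k l : ℕ} (hf : RRankLE R f k) (hg : RRankLE R g l) : RRankLE R (f + g) (k + l) := by
  obtain ⟨c, hc, rfl⟩ := rrankLE_iff.1 hf
  obtain ⟨c', hc', rfl⟩ := rrankLE_iff.1 hg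
  refine rrankLE_iff.2 ⟨Fin.append c c', Fin.addCases (by simpa using hc) (by simpa using hc'), ?_⟩
  simp [Fin.sum_univ_add]

theorem RRankLE.sum {R : Finset (Finset (Finset (Fin d)))} {ι : Type*} {s : Finset ι}
    {f : ι → (∀ j, Fin (n j)) → F} {k : ι → ℕ} (hf : ∀ i ∈ s, RRankLE R (f i) (k i)) :
    RRankLE R (∑ i ∈ s, f i) (∑ i ∈ s, k i) := by
  classical
  induction s using Finset.induction_on with
  | empty =>
    simp only [Finset.sum_empty]
    exact rrankLE_iff.2 ⟨0, fun i => i.elim0, by simp⟩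
  | insert i s his ih =>
    rw [Finset.sum_insert his, Finset.sum_insert his]
    exact (hf i (Finset.mem_insert_self i s)).add
      (ih fun j hj => hf j (Finset.mem_insert_of_mem hj))

variable {M : Finset (Finset (Fin d))}

theorem rankOne_singleton_iff {f : (∀ j, Fin (n j)) → F} :
    RankOne {M} f ↔ ∃ a : Finset (Fin d) → (∀ j, Fin (n j)) → F,
      (∀ N ∈ M, DependsOnlyOn (a N) N) ∧ f = ∏ N ∈ M, a N := by
  simp only [RankOne, Finset.mem_singleton, exists_eq_left, funext_iff, Finset.prod_apply]

theorem RankOne.of_dependsOnlyOn {f : (∀ j, Fin (n j)) → F} {N : Finset (Fin d)} (hN : N ∈ M)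
    (hf : DependsOnlyOn f N) : RankOne {M} f := by
  classical
  refine rankOne_singleton_iff.2 ⟨fun N' => if N' = N then f else 1, fun N' _ => ?_, ?_⟩
  · dsimp only
    split_ifs with hN'
    · exact hN' ▸ hf
    · exact dependsOnlyOn_const 1 N'
  · rw [Finset.prod_ite_eq' M N, if_pos hN]

theorem RankOne.mul {f g : (∀ j, Fin (n j)) → F} (hf : RankOne {M} f) (hg : RankOne {M} g) :
    RankOne {M} (f * g) := by
  obtain ⟨a, ha, rfl⟩ := rankOne_singleton_iff.1 hf
  obtain ⟨b, hb, rfl⟩ := rankOne_singleton_iff.1 hg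
  refine rankOne_singleton_iff.2 ⟨a * b, fun N hN x y hxy => ?_, Finset.prod_mul_distrib.symm⟩
  simp only [Pi.mul_apply, ha N hN x y hxy, hb N hN x y hxy]

theorem RankOne.prod {ι : Type*} {s : Finset ι} {f : ι → (∀ j, Fin (n j)) → F}
    (hf : ∀ i ∈ s, RankOne {M} (f i)) : RankOne {M} (∏ i ∈ s, f i) :=
  Finset.prod_induction f _ (fun _ _ => RankOne.mul)
    (rankOne_singleton_iff.2 ⟨1, fun N _ => dependsOnlyOn_const 1 N, by simp⟩) hf

theorem RankOne.smul (hM : M.Nonempty) {f : (∀ j, Fin (n j)) → F} (hf : RankOne {M} f) (c : F) :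
    RankOne {M} (c • f) := by
  obtain ⟨N, hN⟩ := hM
  exact (RankOne.of_dependsOnlyOn hN (dependsOnlyOn_const c N)).mul hf

theorem RRankLE.smul (hM : M.Nonempty) {f : (∀ j, Fin (n j)) → F} {k : ℕ}
    (hf : RRankLE {M} f k) (c : F) : RRankLE {M} (c • f) k := by
  obtain ⟨b, hb, rfl⟩ := rrankLE_iff.1 hf
  exact rrankLE_iff.2 ⟨fun i => c • b i, fun i => (hb i).smul hM c, Finset.smul_sum⟩

theorem RRankLE.mono (hM : M.Nonempty) {f : (∀ j, Fin (n j)) → F} {k l : ℕ}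
    (hf : RRankLE {M} f k) (hkl : k ≤ l) : RRankLE {M} f l := by
  obtain ⟨N, hN⟩ := hM
  have hzero : RRankLE {M} (0 : (∀ j, Fin (n j)) → F) (l - k) :=
    rrankLE_iff.2 ⟨fun _ => 0, fun _ => RankOne.of_dependsOnlyOn hN (dependsOnlyOn_const 0 N),
      by simp⟩
  simpa [Nat.add_sub_cancel' hkl] using hf.add hzero

theorem RRankLE.mul {f g : (∀ j, Fin (n j)) → F} {k l : ℕ} (hf : RRankLE {M} f k)
    (hg : RRankLE {M} g l) : RRankLE {M} (f * g) (k * l) := by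
  obtain ⟨b, hb, rfl⟩ := rrankLE_iff.1 hf
  obtain ⟨c, hc, rfl⟩ := rrankLE_iff.1 hg
  rw [Finset.sum_mul_sum]
  simpa using RRankLE.sum (s := Finset.univ) fun i _ =>
    RRankLE.sum (s := Finset.univ) fun j _ => ((hb i).mul (hc j)).rrankLE_one

theorem RRankLE.prod {ι : Type*} {s : Finset ι} {f : ι → (∀ j, Fin (n j)) → F} {k : ι → ℕ}
    (hf : ∀ i ∈ s, RRankLE {M} (f i) (k i)) : RRankLE {M} (∏ i ∈ s, f i) (∏ i ∈ s, k i) := by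
  classical
  induction s using Finset.induction_on with
  | empty => simpa using (RankOne.prod (M := M) (f := f) (s := ∅) (by simp)).rrankLE_one
  | insert i s his ih =>
    rw [Finset.prod_insert his, Finset.prod_insert his]
    exact (hf i (Finset.mem_insert_self i s)).mul
      (ih fun j hj => hf j (Finset.mem_insert_of_mem hj))

theorem RRankLE.of_mem_span (hM : M.Nonempty) {G : Finset ((∀ j, Fin (n j)) → F)} {k : ℕ}
    (hG : ∀ g ∈ G, RRankLE {M} g k) {f : (∀ j, Fin (n j)) → F}
    (hf : f ∈ Submodule.span F (G : Set ((∀ j, Fin (n j)) → F))) : RRankLE {M} f (G.card * k) := by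
  obtain ⟨c, -, rfl⟩ := Submodule.mem_span_finset.1 hf
  simpa using RRankLE.sum fun g hg => (hG g hg).smul hM (c g)

theorem RankOne.sliceThrough {Q : Finset (Finset (Fin d))} {J : Finset (Fin d)}
    (hQM : ∀ K ∈ Q, ∃ N ∈ M, J ∩ K ⊆ N) {f : (∀ j, Fin (n j)) → F} (hf : RankOne {Q} f)
    (z : ∀ j, Fin (n j)) : RankOne {M} (sliceThrough J z f) := by
  obtain ⟨b, hb, rfl⟩ := rankOne_singleton_iff.1 hf
  have hprod : _root_.sliceThrough J z (∏ K ∈ Q, b K) =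
      ∏ K ∈ Q, _root_.sliceThrough J z (b K) := by
    funext x
    simp only [_root_.sliceThrough, Finset.prod_apply]
  rw [hprod]
  refine RankOne.prod fun K hK => ?_
  obtain ⟨N, hN, hJKN⟩ := hQM K hK
  exact RankOne.of_dependsOnlyOn hN ((dependsOnlyOn_sliceThrough_inter (hb K hK) J z).mono hJKN)

theorem RRankLE.sliceThrough {Q : Finset (Finset (Fin d))} {J : Finset (Fin d)}
    (hQM : ∀ K ∈ Q, ∃ N ∈ M, J ∩ K ⊆ N) {f : (∀ j, Fin (n j)) → F} {k : ℕ}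
    (hf : RRankLE {Q} f k) (z : ∀ j, Fin (n j)) : RRankLE {M} (sliceThrough J z f) k := by
  obtain ⟨c, hc, rfl⟩ := rrankLE_iff.1 hf
  refine rrankLE_iff.2
    ⟨fun i => _root_.sliceThrough J z (c i), fun i => (hc i).sliceThrough hQM z, ?_⟩
  funext x
  simp only [_root_.sliceThrough, Finset.sum_apply]

theorem RRankLE.exists_eq_sum_prod {P : Finset (Finset (Fin d))}
    {f : (∀ j, Fin (n j)) → F} {k : ℕ} (hf : RRankLE {P} f k) :
    ∃ a : Fin k → Finset (Fin d) → (∀ j, Fin (n j)) → F,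
      (∀ i, ∀ J ∈ P, DependsOnlyOn (a i J) J) ∧ f = ∑ i, ∏ J ∈ P, a i J := by
  obtain ⟨c, hc, rfl⟩ := rrankLE_iff.1 hf
  choose a ha hca using fun i => rankOne_singleton_iff.1 (hc i)
  exact ⟨a, ha, Finset.sum_congr rfl fun i _ => hca i⟩

end Rank

section Partitions

variable {d : ℕ} {P Q : Finset (Finset (Fin d))}

theorem IsPartitionOn.exists_mem (hP : IsPartitionOn d P) (j : Fin d) : ∃ J ∈ P, j ∈ J :=
  Finset.mem_sup.1 (hP.2.2 ▸ Finset.mem_univ j)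

theorem partMeet_nonempty (hP : IsPartitionOn d P) (hQ : IsPartitionOn d Q) (j : Fin d) :
    (partMeet P Q).Nonempty := by
  obtain ⟨J, hJ, hjJ⟩ := hP.exists_mem j
  obtain ⟨K, hK, hjK⟩ := hQ.exists_mem j
  exact ⟨J ∩ K, Finset.mem_filter.2 ⟨Finset.mem_image.2 ⟨(J, K), Finset.mem_product.2 ⟨hJ, hK⟩,
    rfl⟩, j, Finset.mem_inter.2 ⟨hjJ, hjK⟩⟩⟩

theorem exists_mem_partMeet_inter_subset (hPQ : (partMeet P Q).Nonempty) {J K : Finset (Fin d)}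
    (hJ : J ∈ P) (hK : K ∈ Q) : ∃ N ∈ partMeet P Q, J ∩ K ⊆ N := by
  rcases (J ∩ K).eq_empty_or_nonempty with hJK | hJK
  · obtain ⟨N, hN⟩ := hPQ
    exact ⟨N, hN, hJK ▸ Finset.empty_subset N⟩
  · exact ⟨J ∩ K, Finset.mem_filter.2 ⟨Finset.mem_image.2 ⟨(J, K),
      Finset.mem_product.2 ⟨hJ, hK⟩, rfl⟩, hJK⟩, subset_rfl⟩

theorem RRankLE.prod_sliceThrough {n : Fin d → ℕ} (hPQ : (partMeet P Q).Nonempty)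
    {f : (∀ j, Fin (n j)) → F} {s : ℕ} (hf : RRankLE {Q} f s)
    {g : Finset (Fin d) → (∀ j, Fin (n j)) → F}
    (hg : ∀ J ∈ P, ∃ z, _root_.sliceThrough J z f = g J) :
    RRankLE {partMeet P Q} (∏ J ∈ P, g J) (s ^ P.card) := by
  rw [← Finset.prod_const]
  refine RRankLE.prod fun J hJ => ?_
  obtain ⟨z, hz⟩ := hg J hJ
  rw [← hz]
  exact hf.sliceThrough (fun K hK => exists_mem_partMeet_inter_subset hPQ hJ hK) z

theorem IsPartitionOn.card_le (hP : IsPartitionOn d P) : P.card ≤ d := by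
  calc P.card = ∑ _J ∈ P, 1 := by simp
    _ ≤ ∑ J ∈ P, J.card := Finset.sum_le_sum fun J hJ => (hP.1 J hJ).card_pos
    _ = (P.biUnion id).card := (Finset.card_biUnion hP.2.1).symm
    _ = d := by rw [← Finset.sup_eq_biUnion, hP.2.2, Finset.card_univ, Fintype.card_fin]

theorem IsPartitionOn.pow_card_le (hP : IsPartitionOn d P) (j : Fin d) (m : ℕ) :
    m ^ P.card ≤ m ^ d := by
  rcases Nat.eq_zero_or_pos m with rfl | hm
  · obtain ⟨J, hJ, -⟩ := hP.exists_mem j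
    simp [Finset.card_ne_zero_of_mem hJ]
  · exact Nat.pow_le_pow_right hm hP.card_le

end Partitions

theorem meet_rank_of_two_single_partitions {d : ℕ} (hd : 2 ≤ d)
    (n : Fin d → ℕ) (P Q : Finset (Finset (Fin d)))
    (hP : IsPartitionOn d P) (hQ : IsPartitionOn d Q)
    (r s : ℕ) (T : (∀ j, Fin (n j)) → F)
    (hr : RRankLE ({P} : Finset (Finset (Finset (Fin d)))) T r)
    (hs : RRankLE ({Q} : Finset (Finset (Finset (Fin d)))) T s) :
    RRankLE ({partMeet P Q} : Finset (Finset (Finset (Fin d)))) T ((r * s) ^ P.card) ∧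
    RRankLE ({partMeet P Q} : Finset (Finset (Finset (Fin d)))) T ((r * s) ^ d) := by
  classical
  have j : Fin d := ⟨0, by omega⟩
  have hM := partMeet_nonempty hP hQ j
  obtain ⟨a, ha, rfl⟩ := hr.exists_eq_sum_prod
  obtain ⟨E, hE, hspan⟩ := exists_slices_sum_prod_mem_span_prod hP.2.1 ha
  have hrankE : ∀ g ∈ ∏ J ∈ P, E J, RRankLE {partMeet P Q} g (s ^ P.card) := by
    intro g hg
    rw [← Finset.mem_coe, Finset.coe_prod, Set.mem_finsetProd] at hg
    obtain ⟨g, hgE, rfl⟩ := hg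
    exact hs.prod_sliceThrough hM fun J hJ => (hE J hJ).2 _ (hgE hJ)
  have hcard : (∏ J ∈ P, E J).card ≤ r ^ P.card :=
    (card_finsetProd_le P E).trans
      (by simpa using Finset.prod_le_pow_card P _ r fun J hJ => by simpa using (hE J hJ).1)
  have hrank : RRankLE {partMeet P Q} (∑ i, ∏ J ∈ P, a i J) ((r * s) ^ P.card) :=
    (RRankLE.of_mem_span hM hrankE hspan).mono hM
    (by rw [mul_pow]; exact Nat.mul_le_mul_right _ hcard)
  exact ⟨hrank, hrank.mono hM (hP.pow_card_le j _)⟩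
end
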